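/- For all integers m ≥ 0, n ≥ 0 and q ≥ 0, (-1)^m · Σ_{k=0}^{m+q} C(m+q,k) · C(n+q+k,q) · B_{n+k} = (-1)^{n+q} · Σ_{k=0}^{n+q} C(n+q,k) · C(m+q+k,q) · B_{m+k}, where C(a,b) denotes the binomial coefficient. -/

import Mathlib

/-!
Let `L` be the linear functional on `ℚ[X]` sending `X ^ n` to `B_n`. The defining recurrence of
the Bernoulli numbers says `L ((1 + X) ^ n) = (-1) ^ n * B_n`, i.e. `L` is invariant under the
reflection `X ↦ -1 - X`. The two sums of the identity are `L` applied to the `q`-th Hasse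
derivative of `X ^ (n + q) * (1 + X) ^ (m + q)` and of `X ^ (m + q) * (1 + X) ^ (n + q)`; the
reflection exchanges these two polynomials up to sign and commutes with the `q`-th Hasse
derivative up to `(-1) ^ q`.
-/

open Finset
open scoped Nat
open Polynomial hiding bernoulli

theorem sum_range_succ_choose_mul_bernoulli (k : ℕ) :
    ∑ j ∈ range (k + 1), (k.choose j : ℚ) * bernoulli j = (-1) ^ k * bernoulli k := by
  rw [← bernoulli'_eq_bernoulli, ← Polynomial.bernoulli_eval_one]
  simp [Polynomial.bernoulli, eval_finsetSum, mul_comm]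

namespace Polynomial

variable {R : Type*} [CommRing R]

theorem iterate_derivative_comp_C_sub_X (a : R) (p : R[X]) (k : ℕ) :
    derivative^[k] (p.comp (C a - X)) = (-1) ^ k * (derivative^[k] p).comp (C a - X) := by
  induction k generalizing p with
  | zero => simp
  | succ k ih => simp [ih (derivative p), derivative_comp, pow_succ]

theorem hasseDeriv_comp_C_sub_X [IsDomain R] [CharZero R] (a : R) (p : R[X]) (k : ℕ) :
    hasseDeriv k (p.comp (C a - X)) = (-1) ^ k * (hasseDeriv k p).comp (C a - X) := by
  have h (r : R[X]) : k ! • hasseDeriv k r = derivative^[k] r :=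
    congrFun (factorial_smul_hasseDeriv k) r
  apply nsmul_right_injective (Nat.factorial_ne_zero k)
  dsimp only
  rw [h, iterate_derivative_comp_C_sub_X, ← h, smul_comp, mul_smul_comm]

end Polynomial

noncomputable def bernoulliUmbra : ℚ[X] →ₗ[ℚ] ℚ :=
  lsum fun n => LinearMap.toSpanSingleton ℚ ℚ (bernoulli n)

theorem bernoulliUmbra_monomial (n : ℕ) (a : ℚ) :
    bernoulliUmbra (monomial n a) = a * bernoulli n := by
  simp [bernoulliUmbra, lsum_apply, sum_monomial_index]

theorem bernoulliUmbra_X_pow (n : ℕ) : bernoulliUmbra (X ^ n) = bernoulli n := by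
  rw [← monomial_one_right_eq_X_pow, bernoulliUmbra_monomial, one_mul]

theorem bernoulliUmbra_one_add_X_pow (k : ℕ) :
    bernoulliUmbra ((1 + X) ^ k) = (-1) ^ k * bernoulli k := by
  rw [← sum_range_succ_choose_mul_bernoulli, add_comm, add_pow, map_sum]
  refine sum_congr rfl fun j _ => ?_
  rw [one_pow, mul_one, ← C_eq_natCast, mul_comm, C_mul_X_pow_eq_monomial, bernoulliUmbra_monomial]

theorem bernoulliUmbra_comp_neg_one_sub_X (p : ℚ[X]) :
    bernoulliUmbra (p.comp (-1 - X)) = bernoulliUmbra p := by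
  induction p using Polynomial.induction_on' with
  | add p q hp hq => rw [add_comp, map_add, map_add, hp, hq]
  | monomial n a =>
    have h : (-1 - X : ℚ[X]) ^ n = (-1 : ℚ) ^ n • (1 + X) ^ n := by
      rw [smul_eq_C_mul, ← neg_add', neg_pow, map_pow, map_neg, map_one]
    rw [← C_mul_X_pow_eq_monomial, mul_comp, C_comp, X_pow_comp, ← smul_eq_C_mul, ← smul_eq_C_mul,
      h, map_smul, map_smul, map_smul, bernoulliUmbra_one_add_X_pow, bernoulliUmbra_X_pow,
      smul_eq_mul, smul_eq_mul, smul_eq_mul, ← mul_assoc ((-1 : ℚ) ^ n), ← mul_pow]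
    norm_num

theorem bernoulliUmbra_hasseDeriv_comp_neg_one_sub_X (q : ℕ) (p : ℚ[X]) :
    bernoulliUmbra (hasseDeriv q (p.comp (-1 - X))) =
      (-1) ^ q * bernoulliUmbra (hasseDeriv q p) := by
  have h : (-1 - X : ℚ[X]) = C (-1) - X := by simp
  rw [h, hasseDeriv_comp_C_sub_X, ← h, show (-1 : ℚ[X]) ^ q = C ((-1) ^ q) by simp,
    ← smul_eq_C_mul, map_smul, bernoulliUmbra_comp_neg_one_sub_X, smul_eq_mul]

theorem X_pow_mul_one_add_X_pow_comp_neg_one_sub_X {R : Type*} [CommRing R] (i j : ℕ) :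
    (X ^ i * (1 + X) ^ j : R[X]).comp (-1 - X) = (-1 : R) ^ (i + j) • (X ^ j * (1 + X) ^ i) := by
  rw [mul_comp, pow_comp, pow_comp, X_comp, add_comp, one_comp, X_comp,
    show (1 + (-1 - X) : R[X]) = -X by ring, show (-1 - X : R[X]) = -(1 + X) by ring,
    neg_pow, neg_pow (X : R[X]), smul_eq_C_mul, map_pow, map_neg, map_one]
  ring

theorem bernoulliUmbra_hasseDeriv_X_pow_mul_one_add_X_pow (a b q : ℕ) :
    bernoulliUmbra (hasseDeriv q (X ^ (b + q) * (1 + X) ^ (a + q))) =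
      ∑ k ∈ range (a + q + 1),
        ((a + q).choose k : ℚ) * ((b + q + k).choose q : ℚ) * bernoulli (b + k) := by
  rw [add_comm (1 : ℚ[X]), add_pow, mul_sum, map_sum, map_sum]
  refine sum_congr rfl fun k _ => ?_
  have h : (X ^ (b + q) * (X ^ k * C ((a + q).choose k : ℚ))) =
      monomial (b + q + k) ((a + q).choose k : ℚ) := by
    rw [← C_mul_X_pow_eq_monomial]; ring
  rw [one_pow, mul_one, ← C_eq_natCast, h, hasseDeriv_monomial, bernoulliUmbra_monomial,
    show b + q + k - q = b + k by omega]
  ring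

theorem neg_one_pow_mul_bernoulliUmbra_hasseDeriv_swap (m n q : ℕ) :
    (-1) ^ m * bernoulliUmbra (hasseDeriv q (X ^ (n + q) * (1 + X) ^ (m + q))) =
      (-1) ^ (n + q) * bernoulliUmbra (hasseDeriv q (X ^ (m + q) * (1 + X) ^ (n + q))) := by
  have key := bernoulliUmbra_hasseDeriv_comp_neg_one_sub_X q (X ^ (n + q) * (1 + X) ^ (m + q))
  rw [X_pow_mul_one_add_X_pow_comp_neg_one_sub_X, map_smul, map_smul, smul_eq_mul] at key
  set F := bernoulliUmbra (hasseDeriv q (X ^ (n + q) * (1 + X) ^ (m + q)))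
  set G := bernoulliUmbra (hasseDeriv q (X ^ (m + q) * (1 + X) ^ (n + q)))
  have hsq (k : ℕ) : ((-1 : ℚ) ^ k) ^ 2 = 1 := by rw [← pow_mul, pow_mul']; norm_num
  linear_combination (-(-1) ^ m * (-1) ^ q) * key - (-1) ^ m * F * hsq q +
    (-1) ^ n * (-1) ^ q * G * (((-1) ^ q) ^ 2 * hsq m + hsq q)

/-- The Benchérif–Garici identity: for all `m, n, q ≥ 0`,
`(-1)^m ∑_{k=0}^{m+q} C(m+q,k) C(n+q+k,q) B_{n+k}
  = (-1)^{n+q} ∑_{k=0}^{n+q} C(n+q,k) C(m+q+k,q) B_{m+k}`. -/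
theorem bencherif_garici_identity (m n q : ℕ) :
    (-1 : ℚ) ^ m *
        ∑ k ∈ Finset.range (m + q + 1),
          ((m + q).choose k : ℚ) * ((n + q + k).choose q : ℚ) * bernoulli (n + k) =
      (-1 : ℚ) ^ (n + q) *
        ∑ k ∈ Finset.range (n + q + 1),
          ((n + q).choose k : ℚ) * ((m + q + k).choose q : ℚ) * bernoulli (m + k) := by
  rw [← bernoulliUmbra_hasseDeriv_X_pow_mul_one_add_X_pow m n q,
    ← bernoulliUmbra_hasseDeriv_X_pow_mul_one_add_X_pow n m q]
  exact neg_one_pow_mul_bernoulliUmbra_hasseDeriv_swap m n q
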